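/- Let p > 43 be a prime, and suppose v, w ∈ 𝔽_2^p are small vectors such that v, w and ê work together. Then the vector v + w is also small. -/

import Mathlib

/-- The cyclic shift operator on `𝔽₂ⁿ` (indexed by `ZMod n`): `(cshift x) i = x (i - 1)`. -/
def cshift {n : ℕ} (x : ZMod n → ZMod 2) : ZMod n → ZMod 2 := fun i => x (i - 1)

/-- The standard dot product over `𝔽₂`. -/
def dot {n : ℕ} [NeZero n] (v x : ZMod n → ZMod 2) : ZMod 2 := ∑ i, v i * x i

/-- A vector `v ∈ 𝔽₂ⁿ` works if for every `x` some cyclic shift of `x` is orthogonal to `v`. -/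
def Works {n : ℕ} [NeZero n] (v : ZMod n → ZMod 2) : Prop :=
  ∀ x : ZMod n → ZMod 2, ∃ k : ℕ, dot v (cshift^[k] x) = 0

/-- Three vectors `u, v, w ∈ 𝔽₂ⁿ` work together if for every `x` there is a single cyclic
shift of `x` orthogonal to all three. -/
def WorkTogether3 {n : ℕ} [NeZero n] (u v w : ZMod n → ZMod 2) : Prop :=
  ∀ x : ZMod n → ZMod 2, ∃ k : ℕ,
    dot u (cshift^[k] x) = 0 ∧ dot v (cshift^[k] x) = 0 ∧ dot w (cshift^[k] x) = 0

/-- The vector `ê ∈ 𝔽₂ⁿ` with `ê 0 = 0` and `ê i = 1` for `i ≠ 0`. -/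
def ehat (n : ℕ) : ZMod n → ZMod 2 := fun i => if i = 0 then 0 else 1

/-- A vector `u ∈ 𝔽₂ᵖ` is small if there is no `i` with `u i = u (-i) = 1`. -/
def IsSmall {n : ℕ} (u : ZMod n → ZMod 2) : Prop :=
  ¬ ∃ i : ZMod n, u i = 1 ∧ u (-i) = 1

/-!
Suppose `(v + w) i = (v + w) (-i) = 1`. By smallness, after swapping `v` and `w` if necessary,
`v i = w (-i) = 1` and `v (-i) = w i = 0`. Call `m` marked when `(v m, w m) = (1, 0)` or
`(v (-m), w (-m)) = (0, 1)`. Testing the hypothesis against the indicator of `{0, i, -m}`, the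
`ê`-condition forces a shift moving exactly one of the three points to `0`, and then `v` and `w`
agree on the other two. Comparing values shows that if `m` is marked, so is `m + i`. Hence every
nonzero multiple of `i` is marked, in particular `-i = (p - 1) i`, which contradicts the values
at `±i`.
-/
theorem cshift_iterate_apply {n : ℕ} (x : ZMod n → ZMod 2) (k : ℕ) (i : ZMod n) :
    cshift^[k] x i = x (i - k) := by
  induction k generalizing i with
  | zero => simp
  | succ k ih =>
    rw [Function.iterate_succ_apply', cshift, ih, Nat.cast_succ, sub_sub, add_comm]

theorem dot_cshift_iterate_indicator {n : ℕ} [NeZero n] (u : ZMod n → ZMod 2)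
    (S : Finset (ZMod n)) (k : ℕ) :
    dot u (cshift^[k] fun i => if i ∈ S then 1 else 0) = ∑ s ∈ S, u (s + k) := by
  simp only [dot, cshift_iterate_apply, mul_ite, mul_one, mul_zero]
  rw [Fintype.sum_equiv (Equiv.subRight (k : ZMod n)) _ (fun j => if j ∈ S then u (j + k) else 0)
    (fun i => by simp), Finset.sum_ite_mem, Finset.univ_inter]

theorem zmod_two_eq_zero_of_ne_one {a : ZMod 2} (h : a ≠ 1) : a = 0 := by
  revert a
  decide

theorem IsSmall.apply_neg_eq_zero {n : ℕ} {u : ZMod n → ZMod 2} (hu : IsSmall u) {i : ZMod n}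
    (hi : u i = 1) : u (-i) = 0 :=
  zmod_two_eq_zero_of_ne_one fun h => hu ⟨i, hi, h⟩

theorem IsSmall.apply_zero {n : ℕ} {u : ZMod n → ZMod 2} (hu : IsSmall u) : u 0 = 0 :=
  zmod_two_eq_zero_of_ne_one fun h => hu ⟨0, h, by rwa [neg_zero]⟩

theorem IsSmall.of_add_apply {n : ℕ} {u v : ZMod n → ZMod 2} (hu : IsSmall u) (hv : IsSmall v)
    {i : ZMod n} (hi : (u + v) i = 1) (hni : (u + v) (-i) = 1) :
    (u i = 1 ∧ v (-i) = 1) ∨ (v i = 1 ∧ u (-i) = 1) := by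
  have hui : ¬(u i = 1 ∧ u (-i) = 1) := fun h => hu ⟨i, h⟩
  have hvi : ¬(v i = 1 ∧ v (-i) = 1) := fun h => hv ⟨i, h⟩
  rw [Pi.add_apply] at hi hni
  generalize u i = a, u (-i) = b, v i = c, v (-i) = d at *
  revert a b c d
  decide

theorem eq_zero_or_of_ehat_add_ehat_add_ehat {n : ℕ} {x y z : ZMod n}
    (h : ehat n x + ehat n y + ehat n z = 0) : x = 0 ∨ y = 0 ∨ z = 0 := by
  by_contra! hxyz
  simp only [ehat, hxyz, if_false] at h
  exact absurd h (by decide)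

theorem WorkTogether3.symm {n : ℕ} [NeZero n] {u v w : ZMod n → ZMod 2}
    (h : WorkTogether3 u v w) : WorkTogether3 v u w := fun x =>
  (h x).imp fun _ ⟨hu, hv, hw⟩ => ⟨hv, hu, hw⟩

theorem WorkTogether3.agree_of_ne {n : ℕ} [NeZero n] {u v : ZMod n → ZMod 2}
    (h : WorkTogether3 u v (ehat n)) (hu0 : u 0 = 0) (hv0 : v 0 = 0) {a b c : ZMod n}
    (hab : a ≠ b) (hac : a ≠ c) (hbc : b ≠ c) :
    (u (b - a), v (b - a)) = (u (c - a), v (c - a)) ∨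
    (u (a - b), v (a - b)) = (u (c - b), v (c - b)) ∨
    (u (a - c), v (a - c)) = (u (b - c), v (b - c)) := by
  obtain ⟨k, hu, hv, he⟩ := h fun i => if i ∈ ({a, b, c} : Finset (ZMod n)) then 1 else 0
  have sum_three : ∀ f : ZMod n → ZMod 2,
      ∑ s ∈ ({a, b, c} : Finset (ZMod n)), f (s + k) = f (a + k) + f (b + k) + f (c + k) := by
    intro f
    rw [Finset.sum_insert (by simp [hab, hac]), Finset.sum_pair hbc, add_assoc]
  simp only [dot_cshift_iterate_indicator, sum_three] at hu hv he
  simp only [Prod.mk.injEq]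
  generalize (k : ZMod n) = κ at hu hv he
  rcases eq_zero_or_of_ehat_add_ehat_add_ehat he with h | h | h <;>
    obtain rfl : κ = -_ := eq_neg_of_add_eq_zero_right h <;>
    simp only [← sub_eq_add_neg, sub_self, hu0, hv0, zero_add, add_zero,
      CharTwo.add_eq_zero] at hu hv <;>
    simp [hu, hv]

section Propagation

variable {n : ℕ} {v w : ZMod n → ZMod 2} {i m : ZMod n}

def Marked (v w : ZMod n → ZMod 2) (m : ZMod n) : Prop :=
  (v m = 1 ∧ w m = 0) ∨ (v (-m) = 0 ∧ w (-m) = 1)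

theorem marked_neg_swap_iff : Marked w v (-m) ↔ Marked v w m := by
  simp only [Marked, neg_neg, or_comm, and_comm]

theorem marked_add_of_apply_eq [NeZero n] (hv : IsSmall v) (hw : IsSmall w)
    (hwork : WorkTogether3 v w (ehat n)) (hi : i ≠ 0) (hm : m ≠ 0) (hmi : m + i ≠ 0)
    (hvi : v i = 1) (hwi : w (-i) = 1) (hvm : v m = 1) (hwm : w m = 0) :
    Marked v w (m + i) := by
  have him : i ≠ -m := fun h => hmi (by rw [h, add_neg_cancel])
  rcases hwork.agree_of_ne hv.apply_zero hw.apply_zero hi.symm (neg_ne_zero.mpr hm).symm him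
    with h | h | h <;>
    simp only [sub_zero, zero_sub, sub_neg_eq_add, zero_add, Prod.mk.injEq] at h
  · have hvm' := hv.apply_neg_eq_zero hvm
    rw [← h.1, hvi] at hvm'
    exact absurd hvm' one_ne_zero
  · rw [Marked, neg_add', ← h.1, ← h.2]
    exact Or.inr ⟨hv.apply_neg_eq_zero hvi, hwi⟩
  · rw [Marked, add_comm, ← h.1, ← h.2]
    exact Or.inl ⟨hvm, hwm⟩

theorem Marked.add [NeZero n] (hv : IsSmall v) (hw : IsSmall w)
    (hwork : WorkTogether3 v w (ehat n)) (hi : i ≠ 0) (hm : m ≠ 0) (hmi : m + i ≠ 0)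
    (hvi : v i = 1) (hwi : w (-i) = 1) (h : Marked v w m) : Marked v w (m + i) := by
  rcases h with ⟨hvm, hwm⟩ | ⟨hvm, hwm⟩
  · exact marked_add_of_apply_eq hv hw hwork hi hm hmi hvi hwi hvm hwm
  · have h := marked_add_of_apply_eq hw hv hwork.symm (neg_ne_zero.mpr hi) (neg_ne_zero.mpr hm)
      (by rwa [← neg_add, neg_ne_zero]) hwi (by rwa [neg_neg]) hwm hvm
    rwa [← neg_add, marked_neg_swap_iff] at h

end Propagation

theorem marked_natCast_mul {p : ℕ} [Fact p.Prime] {v w : ZMod p → ZMod 2} (hv : IsSmall v)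
    (hw : IsSmall w) (hwork : WorkTogether3 v w (ehat p)) {i : ZMod p} (hi : i ≠ 0)
    (hvi : v i = 1) (hwi : w (-i) = 1) {j : ℕ} (hj : 1 ≤ j) (hjp : j < p) :
    Marked v w (j * i) := by
  have hmul_ne_zero : ∀ k : ℕ, 0 < k → k < p → (k : ZMod p) * i ≠ 0 := fun k hk hkp =>
    mul_ne_zero (by rw [Ne, ZMod.natCast_eq_zero_iff]; exact Nat.not_dvd_of_pos_of_lt hk hkp) hi
  induction j, hj using Nat.le_induction with
  | base => simpa [Marked] using Or.inl ⟨hvi, by simpa using hw.apply_neg_eq_zero hwi⟩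
  | succ j hj ih =>
    have hji := hmul_ne_zero (j + 1) (by omega) hjp
    rw [Nat.cast_succ, add_one_mul] at hji ⊢
    exact (ih (by omega)).add hv hw hwork hi (hmul_ne_zero j hj (by omega)) hji hvi hwi

theorem false_of_apply_eq_one_of_apply_neg_eq_one {p : ℕ} [Fact p.Prime]
    {v w : ZMod p → ZMod 2} (hv : IsSmall v) (hw : IsSmall w)
    (hwork : WorkTogether3 v w (ehat p)) {i : ZMod p} (hvi : v i = 1) (hwi : w (-i) = 1) :
    False := by
  have hi : i ≠ 0 := by
    rintro rfl
    exact absurd (hvi ▸ hv.apply_zero) one_ne_zero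
  have hp := (Fact.out : p.Prime).two_le
  have hlast := marked_natCast_mul hv hw hwork hi hvi hwi (j := p - 1) (by omega) (by omega)
  rw [Nat.cast_pred (by omega), ZMod.natCast_self, zero_sub, neg_one_mul, Marked, neg_neg]
    at hlast
  rcases hlast with h | h
  · exact absurd (h.1.symm.trans (hv.apply_neg_eq_zero hvi)) one_ne_zero
  · exact absurd (h.1.symm.trans hvi) zero_ne_one

theorem add_small_of_work_together_general (p : ℕ) [NeZero p] (hp : p.Prime)
    (v w : ZMod p → ZMod 2) (hv : IsSmall v) (hw : IsSmall w)
    (hwork : WorkTogether3 v w (ehat p)) :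
    IsSmall (v + w) := by
  have := Fact.mk hp
  rintro ⟨i, hi, hni⟩
  rcases hv.of_add_apply hw hi hni with ⟨hvi, hwi⟩ | ⟨hwi, hvi⟩
  · exact false_of_apply_eq_one_of_apply_neg_eq_one hv hw hwork hvi hwi
  · exact false_of_apply_eq_one_of_apply_neg_eq_one hw hv hwork.symm hwi hvi

/-- Let `p > 43` be a prime and suppose `v, w ∈ 𝔽₂ᵖ` are small vectors such that `v`, `w`
and `ê` work together. Then the vector `v + w` is also small. -/
theorem add_small_of_work_together (p : ℕ) [NeZero p] (hp : p.Prime) (hp43 : 43 < p)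
    (v w : ZMod p → ZMod 2) (hv : IsSmall v) (hw : IsSmall w)
    (hwork : WorkTogether3 v w (ehat p)) :
    IsSmall (v + w) :=
  add_small_of_work_together_general p hp v w hv hw hwork
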